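/- Let h: ℝᵈ → ℂ be a bounded measurable function with support U := supp(h) compact and bounded away from 0, and suppose there exist 0 < c such that |h(ω)| ≥ c for a.e. ω ∈ U. Let b ∈ GL_d(ℝ) be expansive in the sense that |λ| > 1 for all eigenvalues λ of b⁻¹... Assume the family {bʲU}_{j∈ℤ} covers ℝᵈ \ {0} with bounded overlap, i.e. there exist 0 < p ≤ P < ∞ with p ≤ ∑_{j∈ℤ} |h(bʲω)|² ≤ P for a.e. ω ∈ ℝᵈ. If for every j ∈ ℤ and every f ∈ L²(ℝᵈ) supported in b⁻ʲU we have m‖f‖² ≤ ∑_{γ∈X} |⟨f, |det b|^{j/2} e^{-2πi bʲγ·(·)} χ_{b⁻ʲU}⟩|² ≤ M‖f‖², then the system {ω ↦ |det b|^{j/2} e^{-2πi bʲγ·ω} h(bʲω) : j ∈ ℤ, γ ∈ X} is a frame for L²(ℝᵈ) with bounds pm and PM. -/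

import Mathlib

/-! With `F_j := f · conj (h ∘ bʲ)`, which vanishes off `b⁻ʲU`, the indicator of `U = supp h` is
absorbed by `h`, so the coefficients of `f` against the system at scale `j` are those of `F_j`
against the exponentials on `b⁻ʲU`; their squares sum to between `m‖F_j‖²` and `M‖F_j‖²`.
By Tonelli, `∑_j ‖F_j‖² = ∫ |f|² ∑_j |h ∘ bʲ|²`, which lies between `p‖f‖²` and `P‖f‖²`. -/

open MeasureTheory Filter
open scoped Classical
noncomputable section

/-- The matrix `bʲ` for `j : ℤ` and an invertible matrix `b`. -/
def zmPow {d : ℕ} (b : (Matrix (Fin d) (Fin d) ℝ)ˣ) (j : ℤ) : Matrix (Fin d) (Fin d) ℝ :=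
  ((b ^ j : (Matrix (Fin d) (Fin d) ℝ)ˣ) : Matrix (Fin d) (Fin d) ℝ)

/-- The affine system element on the Fourier side:
`ψ_{j,γ}(ω) = |det b|^{j/2} e^{-2πi bʲγ·ω} h(bʲω)`. -/
def frameFn {d : ℕ} (b : (Matrix (Fin d) (Fin d) ℝ)ˣ) (h : (Fin d → ℝ) → ℂ)
    (j : ℤ) (γ : Fin d → ℝ) (ω : Fin d → ℝ) : ℂ :=
  (|(zmPow b j).det| ^ ((1 : ℝ) / 2) : ℝ) •
    (Complex.exp (-2 * (Real.pi : ℂ) * Complex.I *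
        ((∑ i, (zmPow b j).mulVec γ i * ω i : ℝ) : ℂ)) *
      h ((zmPow b j).mulVec ω))

open scoped ENNReal

lemma ofReal_le_tsum_enorm_sq_le {ι E : Type*} [NormedAddCommGroup E] {x : ι → E} {p P : ℝ}
    (hp : 0 < p) (hx : p ≤ ∑' j, ‖x j‖ ^ 2 ∧ ∑' j, ‖x j‖ ^ 2 ≤ P) :
    ENNReal.ofReal p ≤ ∑' j, ‖x j‖ₑ ^ 2 ∧ ∑' j, ‖x j‖ₑ ^ 2 ≤ ENNReal.ofReal P := by
  have hsum : Summable fun j => ‖x j‖ ^ 2 := by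
    by_contra hns
    rw [tsum_eq_zero_of_not_summable hns] at hx
    exact hp.not_ge hx.1
  have heq : ∑' j, ‖x j‖ₑ ^ 2 = ENNReal.ofReal (∑' j, ‖x j‖ ^ 2) := by
    simp_rw [ENNReal.ofReal_tsum_of_nonneg (fun j => sq_nonneg _) hsum,
      ENNReal.ofReal_pow (norm_nonneg _), ofReal_norm]
  rw [heq]
  exact ⟨ENNReal.ofReal_le_ofReal hx.1, ENNReal.ofReal_le_ofReal hx.2⟩

section SquareFunction

variable {α ι E 𝕜 : Type*} [MeasurableSpace α] {μ : Measure α}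

lemma eLpNorm_two_sq [NormedAddCommGroup E] (g : α → E) :
    eLpNorm g 2 μ ^ 2 = ∫⁻ a, ‖g a‖ₑ ^ 2 ∂μ := by
  simpa using eLpNorm_nnreal_pow_eq_lintegral (μ := μ) (f := g) (p := 2) two_ne_zero

variable [NormedRing 𝕜] [NormMulClass 𝕜] [Countable ι] {f : α → 𝕜} {g : ι → α → 𝕜}

lemma tsum_eLpNorm_mul_sq (hf : AEStronglyMeasurable f μ)
    (hg : ∀ j, AEStronglyMeasurable (g j) μ) :
    ∑' j, eLpNorm (f * g j) 2 μ ^ 2 = ∫⁻ a, ‖f a‖ₑ ^ 2 * ∑' j, ‖g j a‖ₑ ^ 2 ∂μ := by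
  simp_rw [eLpNorm_two_sq, ← ENNReal.tsum_mul_left, ← mul_pow, ← enorm_mul]
  exact (lintegral_tsum fun j => ((hf.mul (hg j)).enorm.pow_const 2)).symm

lemma tsum_eLpNorm_mul_sq_le (hf : AEStronglyMeasurable f μ)
    (hg : ∀ j, AEStronglyMeasurable (g j) μ) {B : ℝ≥0∞}
    (hB : ∀ᵐ a ∂μ, ∑' j, ‖g j a‖ₑ ^ 2 ≤ B) :
    ∑' j, eLpNorm (f * g j) 2 μ ^ 2 ≤ B * eLpNorm f 2 μ ^ 2 := by
  rw [tsum_eLpNorm_mul_sq hf hg, eLpNorm_two_sq, ← lintegral_const_mul'' _ (hf.enorm.pow_const 2)]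
  exact lintegral_mono_ae (hB.mono fun a ha => by rw [mul_comm]; gcongr)

lemma le_tsum_eLpNorm_mul_sq (hf : AEStronglyMeasurable f μ)
    (hg : ∀ j, AEStronglyMeasurable (g j) μ) {A : ℝ≥0∞}
    (hA : ∀ᵐ a ∂μ, A ≤ ∑' j, ‖g j a‖ₑ ^ 2) :
    A * eLpNorm f 2 μ ^ 2 ≤ ∑' j, eLpNorm (f * g j) 2 μ ^ 2 := by
  rw [tsum_eLpNorm_mul_sq hf hg, eLpNorm_two_sq]
  refine (lintegral_const_mul_le _ _).trans (lintegral_mono_ae (hA.mono fun a ha => ?_))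
  rw [mul_comm]; gcongr

variable {p P : ℝ}

lemma memLp_two_mul_of_ae_tsum_sq_le (hf : MemLp f 2 μ) (hg : ∀ j, AEStronglyMeasurable (g j) μ)
    (hp : 0 < p) (hcover : ∀ᵐ a ∂μ, p ≤ ∑' j, ‖g j a‖ ^ 2 ∧ ∑' j, ‖g j a‖ ^ 2 ≤ P) (j : ι) :
    MemLp (f * g j) 2 μ := by
  refine ⟨hf.1.mul (hg j), ?_⟩
  have hsq : eLpNorm (f * g j) 2 μ ^ 2 < ⊤ := calc
    _ ≤ ∑' i, eLpNorm (f * g i) 2 μ ^ 2 := ENNReal.le_tsum j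
    _ ≤ ENNReal.ofReal P * eLpNorm f 2 μ ^ 2 := tsum_eLpNorm_mul_sq_le hf.1 hg
          (hcover.mono fun _ ha => (ofReal_le_tsum_enorm_sq_le hp ha).2)
    _ < ⊤ := ENNReal.mul_lt_top ENNReal.ofReal_lt_top (ENNReal.pow_lt_top hf.2)
  exact (ENNReal.pow_lt_top_iff.mp hsq).resolve_right two_ne_zero

lemma exists_hasSum_sq_eLpNorm_mul (hf : MemLp f 2 μ) (hg : ∀ j, AEStronglyMeasurable (g j) μ)
    (hp : 0 < p) (hpP : p ≤ P)
    (hcover : ∀ᵐ a ∂μ, p ≤ ∑' j, ‖g j a‖ ^ 2 ∧ ∑' j, ‖g j a‖ ^ 2 ≤ P) :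
    ∃ s, HasSum (fun j => (eLpNorm (f * g j) 2 μ).toReal ^ 2) s ∧
      p * (eLpNorm f 2 μ).toReal ^ 2 ≤ s ∧ s ≤ P * (eLpNorm f 2 μ).toReal ^ 2 := by
  have hae := hcover.mono fun _ ha => ofReal_le_tsum_enorm_sq_le hp ha
  have hnorm : eLpNorm f 2 μ ^ 2 = ENNReal.ofReal ((eLpNorm f 2 μ).toReal ^ 2) := by
    rw [← ENNReal.toReal_pow, ENNReal.ofReal_toReal (ENNReal.pow_ne_top hf.2.ne)]
  have hup := tsum_eLpNorm_mul_sq_le hf.1 hg (hae.mono fun _ ha => ha.2)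
  have hlow := le_tsum_eLpNorm_mul_sq hf.1 hg (hae.mono fun _ ha => ha.1)
  rw [hnorm, ← ENNReal.ofReal_mul (hp.le.trans hpP)] at hup
  rw [hnorm, ← ENNReal.ofReal_mul hp.le] at hlow
  have hfin : ∑' j, eLpNorm (f * g j) 2 μ ^ 2 ≠ ⊤ := ne_top_of_le_ne_top ENNReal.ofReal_ne_top hup
  refine ⟨_, ?_, (ENNReal.ofReal_le_iff_le_toReal hfin).mp hlow,
    ENNReal.toReal_le_of_le_ofReal (mul_nonneg (hp.le.trans hpP) (sq_nonneg _)) hup⟩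
  rw [ENNReal.tsum_toReal_eq (ENNReal.ne_top_of_tsum_ne_top hfin)]
  simpa only [ENNReal.toReal_pow] using ENNReal.hasSum_toReal hfin

end SquareFunction

lemma frame_bounds_of_hasSum {ι : Type*} {S T : ι → ℝ} {s m M p P K : ℝ} (hm : 0 ≤ m)
    (hmM : m ≤ M) (hT0 : ∀ j, 0 ≤ T j) (hT : HasSum T s) (hs : p * K ≤ s ∧ s ≤ P * K)
    (hST : ∀ j, m * T j ≤ S j ∧ S j ≤ M * T j) :
    p * m * K ≤ ∑' j, S j ∧ ∑' j, S j ≤ P * M * K := by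
  have hM : 0 ≤ M := hm.trans hmM
  have hS : HasSum S (∑' j, S j) :=
    (Summable.of_nonneg_of_le (fun j => (mul_nonneg hm (hT0 j)).trans (hST j).1)
      (fun j => (hST j).2) (hT.mul_left M).summable).hasSum
  constructor
  · calc p * m * K = m * (p * K) := by ring
      _ ≤ m * s := by gcongr; exact hs.1
      _ ≤ ∑' j, S j := hasSum_le (fun j => (hST j).1) (hT.mul_left m) hS
  · calc ∑' j, S j ≤ M * s := hasSum_le (fun j => (hST j).2) hS (hT.mul_left M)
      _ ≤ M * (P * K) := by gcongr; exact hs.2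
      _ = P * M * K := by ring

lemma mul_conj_mul_conj_smul_ite {q : Prop} [Decidable q] (a y e : ℂ) (r : ℝ)
    (hy : ¬q → y = 0) :
    a * (starRingEnd ℂ) y * (starRingEnd ℂ) (r • (e * if q then 1 else 0)) =
      a * (starRingEnd ℂ) (r • (e * y)) := by
  by_cases hq : q
  · simp only [hq, if_true, mul_one, Complex.real_smul, map_mul, Complex.conj_ofReal]
    ring
  · simp [hq, hy hq]

theorem frame_of_affine_system_general {d : ℕ} (b : (Matrix (Fin d) (Fin d) ℝ)ˣ)
    (h : (Fin d → ℝ) → ℂ) (hmeas : Measurable h)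
    (U : Set (Fin d → ℝ)) (hUsupp : U = Function.support h)
    (p P : ℝ) (hp : 0 < p) (hpP : p ≤ P)
    (hcover : ∀ᵐ ω ∂(volume : Measure (Fin d → ℝ)),
      p ≤ (∑' j : ℤ, ‖h ((zmPow b j).mulVec ω)‖ ^ 2) ∧
        (∑' j : ℤ, ‖h ((zmPow b j).mulVec ω)‖ ^ 2) ≤ P)
    (X : Set (Fin d → ℝ))
    (m M : ℝ) (hm : 0 < m) (hmM : m ≤ M)
    (hframe : ∀ j : ℤ, ∀ f : (Fin d → ℝ) → ℂ,
      MemLp f 2 (volume : Measure (Fin d → ℝ)) →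
      (∀ ω, (zmPow b j).mulVec ω ∉ U → f ω = 0) →
      (m * ((eLpNorm f 2 (volume : Measure (Fin d → ℝ))).toReal) ^ 2 ≤
        ∑' γ : X, ‖∫ ω : Fin d → ℝ, f ω * (starRingEnd ℂ)
          ((|(zmPow b j).det| ^ ((1 : ℝ) / 2) : ℝ) •
            (Complex.exp (-2 * (Real.pi : ℂ) * Complex.I *
                ((∑ i, (zmPow b j).mulVec (γ : Fin d → ℝ) i * ω i : ℝ) : ℂ)) *
              (if (zmPow b j).mulVec ω ∈ U then 1 else 0)))‖ ^ 2) ∧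
      (∑' γ : X, ‖∫ ω : Fin d → ℝ, f ω * (starRingEnd ℂ)
          ((|(zmPow b j).det| ^ ((1 : ℝ) / 2) : ℝ) •
            (Complex.exp (-2 * (Real.pi : ℂ) * Complex.I *
                ((∑ i, (zmPow b j).mulVec (γ : Fin d → ℝ) i * ω i : ℝ) : ℂ)) *
              (if (zmPow b j).mulVec ω ∈ U then 1 else 0)))‖ ^ 2) ≤
        M * ((eLpNorm f 2 (volume : Measure (Fin d → ℝ))).toReal) ^ 2) :
    ∀ f : (Fin d → ℝ) → ℂ, MemLp f 2 (volume : Measure (Fin d → ℝ)) →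
      (p * m * ((eLpNorm f 2 (volume : Measure (Fin d → ℝ))).toReal) ^ 2 ≤
        ∑' j : ℤ, ∑' γ : X,
          ‖∫ ω : Fin d → ℝ, f ω * (starRingEnd ℂ) (frameFn b h j γ ω)‖ ^ 2) ∧
      ((∑' j : ℤ, ∑' γ : X,
          ‖∫ ω : Fin d → ℝ, f ω * (starRingEnd ℂ) (frameFn b h j γ ω)‖ ^ 2) ≤
        P * M * ((eLpNorm f 2 (volume : Measure (Fin d → ℝ))).toReal) ^ 2) := by
  intro f hf
  subst hUsupp
  set G : ℤ → (Fin d → ℝ) → ℂ := fun j ω => (starRingEnd ℂ) (h ((zmPow b j).mulVec ω))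
  have hG : ∀ j, AEStronglyMeasurable (G j) volume := fun j =>
    (Complex.continuous_conj.measurable.comp
      (hmeas.comp (continuous_const.matrix_mulVec continuous_id).measurable)).aestronglyMeasurable
  have hGcover : ∀ᵐ ω ∂volume, p ≤ ∑' j, ‖G j ω‖ ^ 2 ∧ ∑' j, ‖G j ω‖ ^ 2 ≤ P := by
    simpa only [G, Complex.norm_conj] using hcover
  obtain ⟨s, hs, hbounds⟩ := exists_hasSum_sq_eLpNorm_mul hf hG hp hpP hGcover
  refine frame_bounds_of_hasSum hm.le hmM (fun j => sq_nonneg _) hs hbounds fun j => ?_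
  have hsupp : ∀ ω, (zmPow b j).mulVec ω ∉ Function.support h → (f * G j) ω = 0 :=
    fun ω hω => by simp [G, Function.notMem_support.mp hω]
  have hscale := hframe j (f * G j) (memLp_two_mul_of_ae_tsum_sq_le hf hG hp hGcover j) hsupp
  simp only [Pi.mul_apply, G,
    mul_conj_mul_conj_smul_ite _ _ _ _ Function.notMem_support.mp] at hscale
  exact hscale

/-- Theorem (frame construction): if `h` is bounded, measurable, supported in a compact set `U`
bounded away from `0`, `|h| ≥ c > 0` a.e. on `U`, `p ≤ ∑_j |h(bʲω)|² ≤ P` a.e., `b⁻¹` is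
expansive, and for every `j` the exponentials over `X` form a frame with bounds `m, M` on
functions supported in `b⁻ʲU`, then `{|det b|^{j/2} e^{-2πi bʲγ·ω} h(bʲω)}_{j∈ℤ, γ∈X}` is a
frame of `L²(ℝᵈ)` with bounds `pm` and `PM`. -/
theorem frame_of_affine_system {d : ℕ} (b : (Matrix (Fin d) (Fin d) ℝ)ˣ)
    (hexpansive : ∀ z ∈ spectrum ℂ
      ((zmPow b (-1)).map (algebraMap ℝ ℂ)), 1 < ‖z‖)
    (h : (Fin d → ℝ) → ℂ) (hmeas : Measurable h)
    (C : ℝ) (hbd : ∀ ω, ‖h ω‖ ≤ C)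
    (U : Set (Fin d → ℝ)) (hUsupp : U = Function.support h)
    (hUcompact : IsCompact (closure U)) (hU0 : (0 : Fin d → ℝ) ∉ closure U)
    (c : ℝ) (hc : 0 < c) (hlow : ∀ᵐ ω ∂(volume : Measure (Fin d → ℝ)), ω ∈ U → c ≤ ‖h ω‖)
    (p P : ℝ) (hp : 0 < p) (hpP : p ≤ P)
    (hcover : ∀ᵐ ω ∂(volume : Measure (Fin d → ℝ)),
      p ≤ (∑' j : ℤ, ‖h ((zmPow b j).mulVec ω)‖ ^ 2) ∧
        (∑' j : ℤ, ‖h ((zmPow b j).mulVec ω)‖ ^ 2) ≤ P)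
    (X : Set (Fin d → ℝ)) (hX : X.Countable)
    (hXsep : ∃ δ : ℝ, 0 < δ ∧ ∀ γ γ' : X, γ ≠ γ' → δ ≤ ‖(γ : Fin d → ℝ) - γ'‖)
    (m M : ℝ) (hm : 0 < m) (hmM : m ≤ M)
    (hframe : ∀ j : ℤ, ∀ f : (Fin d → ℝ) → ℂ,
      MemLp f 2 (volume : Measure (Fin d → ℝ)) →
      (∀ ω, (zmPow b j).mulVec ω ∉ U → f ω = 0) →
      (m * ((eLpNorm f 2 (volume : Measure (Fin d → ℝ))).toReal) ^ 2 ≤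
        ∑' γ : X, ‖∫ ω : Fin d → ℝ, f ω * (starRingEnd ℂ)
          ((|(zmPow b j).det| ^ ((1 : ℝ) / 2) : ℝ) •
            (Complex.exp (-2 * (Real.pi : ℂ) * Complex.I *
                ((∑ i, (zmPow b j).mulVec (γ : Fin d → ℝ) i * ω i : ℝ) : ℂ)) *
              (if (zmPow b j).mulVec ω ∈ U then 1 else 0)))‖ ^ 2) ∧
      (∑' γ : X, ‖∫ ω : Fin d → ℝ, f ω * (starRingEnd ℂ)
          ((|(zmPow b j).det| ^ ((1 : ℝ) / 2) : ℝ) •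
            (Complex.exp (-2 * (Real.pi : ℂ) * Complex.I *
                ((∑ i, (zmPow b j).mulVec (γ : Fin d → ℝ) i * ω i : ℝ) : ℂ)) *
              (if (zmPow b j).mulVec ω ∈ U then 1 else 0)))‖ ^ 2) ≤
        M * ((eLpNorm f 2 (volume : Measure (Fin d → ℝ))).toReal) ^ 2) :
    ∀ f : (Fin d → ℝ) → ℂ, MemLp f 2 (volume : Measure (Fin d → ℝ)) →
      (p * m * ((eLpNorm f 2 (volume : Measure (Fin d → ℝ))).toReal) ^ 2 ≤
        ∑' j : ℤ, ∑' γ : X,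
          ‖∫ ω : Fin d → ℝ, f ω * (starRingEnd ℂ) (frameFn b h j γ ω)‖ ^ 2) ∧
      ((∑' j : ℤ, ∑' γ : X,
          ‖∫ ω : Fin d → ℝ, f ω * (starRingEnd ℂ) (frameFn b h j γ ω)‖ ^ 2) ≤
        P * M * ((eLpNorm f 2 (volume : Measure (Fin d → ℝ))).toReal) ^ 2) :=
  frame_of_affine_system_general b h hmeas U hUsupp p P hp hpP hcover X m M hm hmM hframe
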